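/- arXiv:1902.01975 — 8 statements merged into one kernel-verified Lean document; each statement's English description precedes it below -/
import Mathlib

section
/- The solution of the linear system (nλ+nμ)v₀ = 1 + nλv₀ + μ∑_{j=1}^n v_j, together with v₁ = 1/(nλ) and the recursion ((n-i+1)λ + (i-1)μ)v_i = 1 + μ∑_{j=1}^{i-1} v_j + λ(n-i+1)v_{i-1} for 2 ≤ i ≤ n, satisfies v₀ = (1/μ)[ (1/(nρ))∑_{j=1}^{n-1} ∏_{i=1}^{j} (ρ(n-i+1))/(i + (n-i)ρ) + 1/(nρ) + (1/n²)∏_{i=1}^{n-1} (ρ(n-i+1))/(i + (n-i)ρ) ], where ρ = λ/μ. -/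
/-!
Put `W j = ∏_{i=1}^{j} ρ(n-i+1)/(i+(n-i)ρ)` and extend `v` by `v₀ := 0` on the left of the
recursion, so that `v₁ = 1/(nλ)` is its first case. Subtracting consecutive equations of the
recursion eliminates the sums and leaves the first-order recursion
`((n-i-1)λ + (i+1)μ) Δᵢ₊₁ = (n-i)λ Δᵢ` for the increments `Δᵢ = vᵢ₊₁ - vᵢ`; the weights `W` satisfy
the same recursion, so `nλ Δᵢ = Wᵢ` and `nλ vₙ = ∑_{j<n} Wⱼ`. The last equation of the
recursion turns the equation for `v₀` into `nμ v₀ = nμ vₙ + W_{n-1}/n`.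
-/

open Finset

theorem eq_of_mul_succ_eq {M₀ : Type*} [Mul M₀] [Zero M₀] [IsLeftCancelMulZero M₀]
    {a b x y : ℕ → M₀} {m : ℕ} (ha : ∀ k < m, a k ≠ 0)
    (hx : ∀ k < m, a k * x (k + 1) = b k * x k) (hy : ∀ k < m, a k * y (k + 1) = b k * y k)
    (h0 : x 0 = y 0) : ∀ k ≤ m, x k = y k := by
  intro k hk
  induction k with
  | zero => exact h0
  | succ k ih =>
    refine mul_left_cancel₀ (ha k hk) ?_
    rw [hx k hk, hy k hk, ih (by omega)]

namespace LCFS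

noncomputable def weight (n : ℕ) (rho : ℝ) (j : ℕ) : ℝ :=
  ∏ i ∈ Icc 1 j, (rho * ((n : ℝ) - i + 1)) / ((i : ℝ) + ((n : ℝ) - i) * rho)

variable {n : ℕ} {rho lam mu : ℝ}

@[simp]
theorem weight_zero (n : ℕ) (rho : ℝ) : weight n rho 0 = 1 := by
  simp [weight]

theorem weight_succ {k : ℕ} (hk : k + 1 ≤ n) (hrho : 0 ≤ rho) :
    ((k + 1 : ℝ) + ((n : ℝ) - (k + 1)) * rho) * weight n rho (k + 1) =
      rho * ((n : ℝ) - k) * weight n rho k := by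
  have hkn : (k + 1 : ℝ) ≤ n := by exact_mod_cast hk
  have hden : (k + 1 : ℝ) + ((n : ℝ) - (k + 1)) * rho ≠ 0 := by
    nlinarith
  rw [weight, prod_Icc_succ_top (by omega), ← weight]
  push_cast
  field_simp
  ring

/-- The recursion of the statement with `v₀` replaced by `0` and `i` shifted to `i + 1`; its case
`i = 0` is `v₁ = 1/(nλ)`. -/
structure IsSolution (n : ℕ) (lam mu : ℝ) (w : ℕ → ℝ) : Prop where
  zero : w 0 = 0
  balance : ∀ i, i + 1 ≤ n → (((n : ℝ) - i) * lam + i * mu) * w (i + 1) =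
    1 + mu * ∑ j ∈ Icc 1 i, w j + lam * ((n : ℝ) - i) * w i

theorem isSolution_update_zero {v : ℕ → ℝ} (hlam : lam ≠ 0) (h1 : v 1 = 1 / (n * lam))
    (hrec : ∀ i : ℕ, 2 ≤ i → i ≤ n →
      (((n : ℝ) - i + 1) * lam + ((i : ℝ) - 1) * mu) * v i =
        1 + mu * ∑ j ∈ Icc 1 (i - 1), v j + lam * ((n : ℝ) - i + 1) * v (i - 1)) :
    IsSolution n lam mu (Function.update v 0 0) where
  zero := Function.update_self ..
  balance i hi := by
    have hupd : ∀ j ≠ 0, Function.update v 0 0 j = v j := fun j hj => Function.update_of_ne hj _ _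
    have hsum : ∑ j ∈ Icc 1 i, Function.update v 0 0 j = ∑ j ∈ Icc 1 i, v j :=
      sum_congr rfl fun j hj => hupd j (by grind)
    rw [hsum, hupd (i + 1) (by omega)]
    rcases Nat.eq_zero_or_pos i with rfl | hi0
    · have hn : (n : ℝ) ≠ 0 := by exact_mod_cast (by omega : n ≠ 0)
      have hv1 : (n : ℝ) * lam * v 1 = 1 := by
        rw [h1]
        field_simp
      simpa using hv1
    · have h := hrec (i + 1) (by omega) hi
      rw [Nat.add_sub_cancel] at h
      push_cast at h
      rw [hupd i hi0.ne']
      linear_combination h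

namespace IsSolution

variable {w : ℕ → ℝ}

theorem one (hw : IsSolution n lam mu w) (hn : 1 ≤ n) : n * lam * w 1 = 1 := by
  simpa [hw.zero] using hw.balance 0 hn

theorem increment_succ (hw : IsSolution n lam mu w) {i : ℕ} (hi : i + 2 ≤ n) :
    (((n : ℝ) - (i + 1)) * lam + (i + 1) * mu) * (w (i + 2) - w (i + 1)) =
      lam * ((n : ℝ) - i) * (w (i + 1) - w i) := by
  have h₁ := hw.balance i (by omega)
  have h₂ := hw.balance (i + 1) hi
  rw [sum_Icc_succ_top (by omega : 1 ≤ i + 1)] at h₂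
  push_cast at h₂
  linear_combination h₂ - h₁

theorem mul_increment_eq_weight (hw : IsSolution n lam mu w) (hlam : 0 < lam) (hmu : 0 < mu)
    {k : ℕ} (hk : k + 1 ≤ n) : n * lam * (w (k + 1) - w k) = weight n (lam / mu) k := by
  refine eq_of_mul_succ_eq (m := n - 1) (a := fun k => ((n : ℝ) - (k + 1)) * lam + (k + 1) * mu)
    (b := fun k => lam * ((n : ℝ) - k)) (x := fun k => n * lam * (w (k + 1) - w k))
    (y := weight n (lam / mu)) ?_ ?_ ?_ ?_ k (by omega)
  · intro k hk
    have hkn : (k + 1 : ℝ) ≤ n := by exact_mod_cast (by omega : k + 1 ≤ n)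
    nlinarith
  · intro k hk
    linear_combination (n * lam) * hw.increment_succ (by omega : k + 2 ≤ n)
  · intro k hk
    have h := weight_succ (rho := lam / mu) (by omega : k + 1 ≤ n) (by positivity)
    set rho := lam / mu
    have hrho : lam = rho * mu := by simp [rho, hmu.ne']
    rw [hrho]
    linear_combination mu * h
  · simp [hw.zero, hw.one (by omega)]

theorem mul_eq_one_add_sum_weight (hw : IsSolution n lam mu w) (hlam : 0 < lam) (hmu : 0 < mu)
    {k : ℕ} (hk : k + 1 ≤ n) : n * lam * w (k + 1) = 1 + ∑ j ∈ Icc 1 k, weight n (lam / mu) j := by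
  induction k with
  | zero => simpa using hw.one hk
  | succ k ih =>
    rw [sum_Icc_succ_top (by omega), ← hw.mul_increment_eq_weight hlam hmu hk, ← add_assoc,
      ← ih (by omega)]
    ring

theorem mu_mul_sum_eq {m : ℕ} (hw : IsSolution (m + 1) lam mu w) :
    mu * ∑ j ∈ Icc 1 (m + 1), w j = (m + 1) * mu * w (m + 1) + lam * (w (m + 1) - w m) - 1 := by
  have h := hw.balance m le_rfl
  rw [sum_Icc_succ_top (by omega)]
  push_cast at h
  linear_combination -h

end IsSolution

end LCFS

open LCFS

theorem aoi_single_source_n_servers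
    (n : ℕ) (hn : 1 ≤ n) (lam mu : ℝ) (hlam : 0 < lam) (hmu : 0 < mu)
    (rho : ℝ) (hrho : rho = lam / mu)
    (v : ℕ → ℝ)
    (h0 : (n * lam + n * mu) * v 0 = 1 + n * lam * v 0 + mu * ∑ j ∈ Icc 1 n, v j)
    (h1 : v 1 = 1 / (n * lam))
    (hrec : ∀ i : ℕ, 2 ≤ i → i ≤ n →
      (((n : ℝ) - i + 1) * lam + ((i : ℝ) - 1) * mu) * v i =
        1 + mu * ∑ j ∈ Icc 1 (i - 1), v j + lam * ((n : ℝ) - i + 1) * v (i - 1)) :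
    v 0 = (1 / mu) *
      ((1 / (n * rho)) * ∑ j ∈ Icc 1 (n - 1), ∏ i ∈ Icc 1 j,
          (rho * ((n : ℝ) - i + 1)) / ((i : ℝ) + ((n : ℝ) - i) * rho)
        + 1 / (n * rho)
        + (1 / (n : ℝ) ^ 2) * ∏ i ∈ Icc 1 (n - 1),
          (rho * ((n : ℝ) - i + 1)) / ((i : ℝ) + ((n : ℝ) - i) * rho)) := by
  have hw := isSolution_update_zero hlam.ne' h1 hrec
  set w := Function.update v 0 0
  have hsum : ∑ j ∈ Icc 1 n, v j = ∑ j ∈ Icc 1 n, w j :=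
    sum_congr rfl fun j hj => (Function.update_of_ne (by grind) _ _).symm
  have hweight : ∀ j : ℕ, ∏ i ∈ Icc 1 j, (rho * ((n : ℝ) - i + 1)) /
      ((i : ℝ) + ((n : ℝ) - i) * rho) = weight n rho j := fun _ => rfl
  simp only [hweight]
  obtain ⟨m, rfl⟩ : ∃ m, n = m + 1 := ⟨n - 1, by omega⟩
  have hv0 : (m + 1) * mu * v 0 = (m + 1) * mu * w (m + 1) + lam * (w (m + 1) - w m) := by
    push_cast at h0
    linear_combination h0 + mu * hsum + hw.mu_mul_sum_eq
  have hvn := hw.mul_eq_one_add_sum_weight hlam hmu le_rfl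
  have hinc := hw.mul_increment_eq_weight hlam hmu le_rfl
  rw [Nat.add_sub_cancel]
  subst hrho
  rw [← hinc]
  push_cast at hvn ⊢
  field_simp
  linear_combination lam * hv0 + mu * hvn
end

section
/- For the differences w_{i+1} := v_{i+1} − v_i of the solution of the recursion ((n-i+1)λ + (i-1)μ)v_i = 1 + μ∑_{j=1}^{i-1} v_j + λ(n-i+1)v_{i-1} (with v₁ = 1/(nλ)), one has for all 2 ≤ i ≤ n−1 the relation (iμ + (n-i)λ)(v_{i+1} − v_i) = λ(n-i+1)(v_i − v_{i-1}), and consequently w_j = (1/(nλ)) ∏_{i=1}^{j-1} (λ(n-i+1))/(iμ + (n-i)λ) for all 2 ≤ j ≤ n. -/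
/-!
Subtracting the recursion at `i` from the one at `i + 1` cancels the constant `1` and all of the
running sum except its new term `μ vᵢ`, leaving the first-order relation
`(iμ + (n-i)λ) w_{i+1} = λ(n-i+1) wᵢ` between consecutive differences. At `i = 2` the same
cancellation gives `((n-1)λ + μ) w₂ = 1 = λn · 1/(nλ)`, which is the case `i = 1` of that
relation with `1/(nλ)` in place of `w₁`. Iterating the relation yields the product formula.
-/

open Finset

theorem eq_mul_prod_Ico_of_succ_eq_mul {M : Type*} [CommMonoid M] {x r : ℕ → M} {a b : ℕ}
    (hstep : ∀ i, a ≤ i → i < b → x (i + 1) = r i * x i) :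
    ∀ j, a ≤ j → j ≤ b → x j = x a * ∏ i ∈ Ico a j, r i := by
  intro j haj
  induction j, haj using Nat.le_induction with
  | base => simp
  | succ j haj ih =>
    intro hjb
    rw [prod_Ico_succ_top haj, hstep j haj hjb, ih (by omega)]
    ac_rfl

def AoiRecursion (n : ℕ) (lam mu : ℝ) (v : ℕ → ℝ) : Prop :=
  ∀ i : ℕ, 2 ≤ i → i ≤ n →
    (((n : ℝ) - i + 1) * lam + ((i : ℝ) - 1) * mu) * v i =
      1 + mu * ∑ j ∈ Icc 1 (i - 1), v j + lam * ((n : ℝ) - i + 1) * v (i - 1)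

noncomputable def aoiRatio (n : ℕ) (lam mu : ℝ) (i : ℕ) : ℝ :=
  lam * ((n : ℝ) - i + 1) / ((i : ℝ) * mu + ((n : ℝ) - i) * lam)

theorem aoi_denom_pos {n i : ℕ} {lam mu : ℝ} (hlam : 0 < lam) (hmu : 0 < mu)
    (hi : 1 ≤ i) (hin : i ≤ n) : 0 < (i : ℝ) * mu + ((n : ℝ) - i) * lam := by
  have hi' : (1 : ℝ) ≤ i := by exact_mod_cast hi
  have hin' : (i : ℝ) ≤ n := by exact_mod_cast hin
  nlinarith

namespace AoiRecursion

variable {n : ℕ} {lam mu : ℝ} {v : ℕ → ℝ}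

theorem mul_sub_succ (hrec : AoiRecursion n lam mu v) {i : ℕ} (hi : 2 ≤ i) (hin : i + 1 ≤ n) :
    ((i : ℝ) * mu + ((n : ℝ) - i) * lam) * (v (i + 1) - v i) =
      lam * ((n : ℝ) - i + 1) * (v i - v (i - 1)) := by
  have hsum : ∑ j ∈ Icc 1 (i + 1 - 1), v j = ∑ j ∈ Icc 1 (i - 1), v j + v i := by
    rw [show i + 1 - 1 = i - 1 + 1 by omega, sum_Icc_succ_top (by omega),
      Nat.sub_add_cancel (by omega)]
  have hnext := hrec (i + 1) (by omega) hin
  rw [hsum, Nat.add_sub_cancel] at hnext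
  push_cast at hnext
  linear_combination hnext - hrec i hi (by omega)

theorem sub_succ_eq_aoiRatio_mul (hrec : AoiRecursion n lam mu v) (hlam : 0 < lam)
    (hmu : 0 < mu) {i : ℕ} (hi : 2 ≤ i) (hin : i + 1 ≤ n) :
    v (i + 1) - v i = aoiRatio n lam mu i * (v i - v (i - 1)) := by
  have hpos := aoi_denom_pos (n := n) hlam hmu (by omega : 1 ≤ i) (by omega)
  rw [aoiRatio, div_mul_eq_mul_div, eq_div_iff hpos.ne', mul_comm]
  exact hrec.mul_sub_succ hi hin

theorem sub_two_one (hrec : AoiRecursion n lam mu v) (hlam : 0 < lam) (hn : 2 ≤ n) :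
    v 2 - v 1 = 1 / (n * lam) * aoiRatio n lam mu 1 := by
  have hratio : 1 / (n * lam) * aoiRatio n lam mu 1 = 1 / (mu + (n - 1) * lam) := by
    rw [aoiRatio, Nat.cast_one]
    field_simp
    ring
  have h2 := hrec 2 le_rfl hn
  norm_num at h2
  rw [hratio]
  exact eq_one_div_of_mul_eq_one_right (by linear_combination h2)

end AoiRecursion

theorem aoi_differences_w_general
    (n : ℕ) (lam mu : ℝ) (hlam : 0 < lam) (hmu : 0 < mu)
    (v : ℕ → ℝ)
    (hrec : ∀ i : ℕ, 2 ≤ i → i ≤ n →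
      (((n : ℝ) - i + 1) * lam + ((i : ℝ) - 1) * mu) * v i =
        1 + mu * ∑ j ∈ Icc 1 (i - 1), v j + lam * ((n : ℝ) - i + 1) * v (i - 1)) :
    (∀ i : ℕ, 2 ≤ i → i ≤ n - 1 →
      ((i : ℝ) * mu + ((n : ℝ) - i) * lam) * (v (i + 1) - v i) =
        lam * ((n : ℝ) - i + 1) * (v i - v (i - 1))) ∧
    (∀ j : ℕ, 2 ≤ j → j ≤ n →
      v j - v (j - 1) = (1 / (n * lam)) * ∏ i ∈ Icc 1 (j - 1),
        (lam * ((n : ℝ) - i + 1)) / ((i : ℝ) * mu + ((n : ℝ) - i) * lam)) := by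
  have hrec : AoiRecursion n lam mu v := hrec
  refine ⟨fun i hi hin => hrec.mul_sub_succ hi (by omega), fun j hj hjn => ?_⟩
  have hprod := eq_mul_prod_Ico_of_succ_eq_mul (x := fun j => v j - v (j - 1))
    (r := aoiRatio n lam mu) (a := 2) (b := n)
    (fun i hi hin => hrec.sub_succ_eq_aoiRatio_mul hlam hmu hi hin) j hj hjn
  rw [hprod, show 2 - 1 = 1 from rfl, hrec.sub_two_one hlam (by omega), mul_assoc,
    ← prod_eq_prod_Ico_succ_bot (by omega),
    Icc_sub_one_right_eq_Ico_of_not_isMin (by simp only [isMin_iff_eq_bot, Nat.bot_eq_zero]; omega)]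
  rfl

theorem aoi_differences_w
    (n : ℕ) (hn : 2 ≤ n) (lam mu : ℝ) (hlam : 0 < lam) (hmu : 0 < mu)
    (v : ℕ → ℝ)
    (h1 : v 1 = 1 / (n * lam))
    (hrec : ∀ i : ℕ, 2 ≤ i → i ≤ n →
      (((n : ℝ) - i + 1) * lam + ((i : ℝ) - 1) * mu) * v i =
        1 + mu * ∑ j ∈ Icc 1 (i - 1), v j + lam * ((n : ℝ) - i + 1) * v (i - 1)) :
    (∀ i : ℕ, 2 ≤ i → i ≤ n - 1 →
      ((i : ℝ) * mu + ((n : ℝ) - i) * lam) * (v (i + 1) - v i) =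
        lam * ((n : ℝ) - i + 1) * (v i - v (i - 1))) ∧
    (∀ j : ℕ, 2 ≤ j → j ≤ n →
      v j - v (j - 1) = (1 / (n * lam)) * ∏ i ∈ Icc 1 (j - 1),
        (lam * ((n : ℝ) - i + 1)) / ((i : ℝ) * mu + ((n : ℝ) - i) * lam)) :=
  aoi_differences_w_general n lam mu hlam hmu v hrec
end

section
/- The unique solution (v₀, v₁, v₂) of the system: 2μv₀ = 1 + μ(v₁+v₂); (λ + λ₁)v₁ = 1 + (λ−λ₁)v₂; (2λ − λ₁ + μ)v₂ = 1 + (λ₁+μ)v₁ + 2(λ−λ₁)v₀, satisfies v₀ = 1/(2(λ+μ)) + (λ+μ)/(2μλ₁). -/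
/-! The multipliers `λ² + μλ₁`, `μ(λ + μ)` and `μλ` of the three balance equations cancel
`v₁` and `v₂`, leaving `2μλ₁(λ + μ) v₀ = μλ₁ + (λ + μ)²`. Since `μλ₁ > 0`, this also forces
`λ + μ ≠ 0`, and dividing gives the formula. -/

theorem two_server_balance_eliminate {R : Type*} [CommRing R] {lam mu lam1 v0 v1 v2 : R}
    (h0 : 2 * mu * v0 = 1 + mu * (v1 + v2))
    (h1 : (lam + lam1) * v1 = 1 + (lam - lam1) * v2)
    (h2 : (2 * lam - lam1 + mu) * v2 = 1 + (lam1 + mu) * v1 + 2 * (lam - lam1) * v0) :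
    2 * mu * lam1 * (lam + mu) * v0 = mu * lam1 + (lam + mu) ^ 2 := by
  linear_combination (lam ^ 2 + mu * lam1) * h0 + mu * (lam + mu) * h1 + mu * lam * h2

theorem aoi_two_servers_multiple_sources_general
    (lam mu lam1 : ℝ) (hmu : 0 < mu)
    (hlam1 : 0 < lam1)
    (v0 v1 v2 : ℝ)
    (h0 : 2 * mu * v0 = 1 + mu * (v1 + v2))
    (h1 : (lam + lam1) * v1 = 1 + (lam - lam1) * v2)
    (h2 : (2 * lam - lam1 + mu) * v2 = 1 + (lam1 + mu) * v1 + 2 * (lam - lam1) * v0) :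
    v0 = 1 / (2 * (lam + mu)) + (lam + mu) / (2 * mu * lam1) := by
  have key := two_server_balance_eliminate h0 h1 h2
  have hlm : lam + mu ≠ 0 := by
    intro hzero
    rw [hzero] at key
    nlinarith [mul_pos hmu hlam1]
  field_simp
  linear_combination key

theorem aoi_two_servers_multiple_sources
    (lam mu lam1 : ℝ) (hmu : 0 < mu) (hlam : 0 < lam)
    (hlam1 : 0 < lam1) (hle : lam1 ≤ lam)
    (v0 v1 v2 : ℝ)
    (h0 : 2 * mu * v0 = 1 + mu * (v1 + v2))
    (h1 : (lam + lam1) * v1 = 1 + (lam - lam1) * v2)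
    (h2 : (2 * lam - lam1 + mu) * v2 = 1 + (lam1 + mu) * v1 + 2 * (lam - lam1) * v0) :
    v0 = 1 / (2 * (lam + mu)) + (lam + mu) / (2 * mu * lam1) :=
  aoi_two_servers_multiple_sources_general lam mu lam1 hmu hlam1 v0 v1 v2 h0 h1 h2
end

section
/- The solution of the SHS linear system for a single source and two heterogeneous servers satisfies v₁₀ + v₂₀ = 1/(μ₁+μ₂) + 1/(λ₁+λ₂) + (1/((μ₁+μ₂)(λ₁+λ₂)))·( μ₁λ₂/(λ₁+μ₂) + μ₂λ₁/(λ₂+μ₁) ). -/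
/-!
Adding the two balance equations cancels the `λ`-terms, leaving
`(μ₁+μ₂)(v₁₀+v₂₀) = π₁ + π₂ + μ₁(v₁₁+v₂₁) + μ₂(v₁₂+v₂₂)`, in which every term on the right
is explicit; dividing by `μ₁+μ₂` gives the formula.
-/

theorem add_balance_eqs {R : Type*} [CommRing R] {a b m₁ m₂ p₁ p₂ x y u₁₁ u₁₂ u₂₁ u₂₂ : R}
    (hx : (a + b + m₁ + m₂) * x = p₁ + a * x + a * y + m₁ * u₁₁ + m₂ * u₁₂)
    (hy : (a + b + m₁ + m₂) * y = p₂ + b * x + b * y + m₁ * u₂₁ + m₂ * u₂₂) :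
    (m₁ + m₂) * (x + y) = p₁ + p₂ + m₁ * (u₁₁ + u₂₁) + m₂ * (u₁₂ + u₂₂) := by
  linear_combination hx + hy

theorem aoi_two_heterogeneous_servers
    (lam1 lam2 mu1 mu2 : ℝ)
    (hlam1 : 0 < lam1) (hlam2 : 0 < lam2) (hmu1 : 0 < mu1) (hmu2 : 0 < mu2)
    (pi1 pi2 v11 v22 v12 v21 v10 v20 : ℝ)
    (hpi1 : pi1 = lam1 / (lam1 + lam2))
    (hpi2 : pi2 = lam2 / (lam1 + lam2))
    (hv11 : v11 = pi1 / (lam1 + lam2))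
    (hv22 : v22 = pi2 / (lam1 + lam2))
    (hv12 : v12 = pi1 * (1 / (lam1 + lam2) + 1 / (lam2 + mu1)))
    (hv21 : v21 = pi2 * (1 / (lam1 + lam2) + 1 / (lam1 + mu2)))
    (h10 : (lam1 + lam2 + mu1 + mu2) * v10 =
        pi1 + lam1 * v10 + lam1 * v20 + mu1 * v11 + mu2 * v12)
    (h20 : (lam1 + lam2 + mu1 + mu2) * v20 =
        pi2 + lam2 * v10 + lam2 * v20 + mu1 * v21 + mu2 * v22) :
    v10 + v20 = 1 / (mu1 + mu2) + 1 / (lam1 + lam2) +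
      (1 / ((mu1 + mu2) * (lam1 + lam2))) *
        (mu1 * lam2 / (lam1 + mu2) + mu2 * lam1 / (lam2 + mu1)) := by
  have hbal := add_balance_eqs h10 h20
  have hmu : mu1 + mu2 ≠ 0 := by positivity
  have hlam : lam1 + lam2 ≠ 0 := by positivity
  have hlam2mu1 : lam2 + mu1 ≠ 0 := by positivity
  have hlam1mu2 : lam1 + mu2 ≠ 0 := by positivity
  have hpi : pi1 + pi2 = 1 := by rw [hpi1, hpi2, ← add_div, div_self hlam]
  have hv1 : v11 + v21 = 1 / (lam1 + lam2) + pi2 / (lam1 + mu2) := by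
    rw [hv11, hv21]; linear_combination hpi / (lam1 + lam2)
  have hv2 : v12 + v22 = 1 / (lam1 + lam2) + pi1 / (lam2 + mu1) := by
    rw [hv12, hv22]; linear_combination hpi / (lam1 + lam2)
  rw [hpi, hv1, hv2, hpi1, hpi2] at hbal
  apply mul_left_cancel₀ hmu
  rw [hbal]
  field_simp
  ring
end

section
/- In the heterogeneous two-server AoI formula Δ(λ₁) = 1/(μ₁+μ₂) + 1/λ + (1/((μ₁+μ₂)λ))·( μ₁(λ−λ₁)/(λ₁+μ₂) + μ₂λ₁/(λ−λ₁+μ₁) ) with total rate λ₁ + λ₂ = λ fixed, if μ₁ = μ₂ then λ₁ = λ/2 minimizes Δ over λ₁ ∈ [0, λ]. -/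
/-! With `a = l₁ + μ` and `b = λ - l₁ + μ`, the bracket in `Δ` equals
`μ (λ + μ)(λ + 2μ) / (a b) - 2μ`. Since `a + b = λ + 2μ` is independent of `l₁`, the product `a b`
is largest at `a = b`, i.e. at `l₁ = λ / 2`, where the bracket is therefore smallest. -/

lemma split_sum_eq_div_mul_sub (lam mu x : ℝ) (ha : x + mu ≠ 0) (hb : lam - x + mu ≠ 0) :
    mu * (lam - x) / (x + mu) + mu * x / (lam - x + mu) =
      mu * (lam + mu) * (lam + 2 * mu) / ((x + mu) * (lam - x + mu)) - 2 * mu := by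
  field_simp
  ring

lemma mul_le_mul_half_split (lam mu x : ℝ) :
    (x + mu) * (lam - x + mu) ≤ (lam / 2 + mu) * (lam - lam / 2 + mu) := by
  nlinarith [sq_nonneg (x - lam / 2)]

lemma split_sum_half_le (lam mu x : ℝ) (hmu : 0 < mu) (hx₀ : 0 ≤ x) (hx₁ : x ≤ lam) :
    mu * (lam - lam / 2) / (lam / 2 + mu) + mu * (lam / 2) / (lam - lam / 2 + mu) ≤
      mu * (lam - x) / (x + mu) + mu * x / (lam - x + mu) := by
  have ha : 0 < x + mu := by linarith
  have hb : 0 < lam - x + mu := by linarith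
  rw [split_sum_eq_div_mul_sub lam mu x ha.ne' hb.ne',
    split_sum_eq_div_mul_sub lam mu (lam / 2) (by linarith) (by linarith)]
  have hnum : 0 ≤ mu * (lam + mu) * (lam + 2 * mu) := by
    have hlam : 0 ≤ lam := hx₀.trans hx₁
    positivity
  exact sub_le_sub_right
    (div_le_div_of_nonneg_left hnum (mul_pos ha hb) (mul_le_mul_half_split lam mu x)) _

theorem equal_service_rates_half_split_optimal_general
    (lam mu : ℝ) (hmu : 0 < mu)
    (Delta : ℝ → ℝ)
    (hDelta : Delta = fun l1 =>
      1 / (mu + mu) + 1 / lam + (1 / ((mu + mu) * lam)) *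
        (mu * (lam - l1) / (l1 + mu) + mu * l1 / (lam - l1 + mu))) :
    ∀ l1 ∈ Set.Icc (0 : ℝ) lam, Delta (lam / 2) ≤ Delta l1 := by
  rintro l1 ⟨h0, h1⟩
  have hlam : 0 ≤ lam := h0.trans h1
  subst hDelta
  dsimp only
  gcongr _ + _ * ?_
  exact split_sum_half_le lam mu l1 hmu h0 h1

theorem equal_service_rates_half_split_optimal
    (lam mu : ℝ) (hlam : 0 < lam) (hmu : 0 < mu)
    (Delta : ℝ → ℝ)
    (hDelta : Delta = fun l1 =>
      1 / (mu + mu) + 1 / lam + (1 / ((mu + mu) * lam)) *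
        (mu * (lam - l1) / (l1 + mu) + mu * l1 / (lam - l1 + mu))) :
    ∀ l1 ∈ Set.Icc (0 : ℝ) lam, Delta (lam / 2) ≤ Delta l1 :=
  equal_service_rates_half_split_optimal_general lam mu hmu Delta hDelta
end

section
/- If μ₁ < μ₂ and μ₂² − μ₁(λ+μ₁)(λ+μ₂)/μ₂ < 0, then the quadratic λ₁²(1−c) + 2λ₁(μ₂ + c(λ+μ₁)) + μ₂² − c(λ+μ₁)² = 0, with c = μ₁(λ+μ₂)/(μ₂(λ+μ₁)), has exactly one positive real root, given by λ₁* = [ −(μ₂ + c(λ+μ₁)) + √( μ₁(λ+μ₂)(2 + μ₂/(λ+μ₁) + (λ+μ₁)/μ₂) ) ] / (1 − μ₁(λ+μ₂)/(μ₂(λ+μ₁))). -/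
/-! The leading coefficient `1 - c` is positive (as `μ₁ < μ₂`) and the constant term is negative
(this is `hcond`), so the two roots have opposite signs and the larger one, given by the quadratic
formula, is the only positive root. The radicand in `lamstar` is the reduced discriminant
`(μ₂ + c(λ+μ₁))² - (1 - c)(μ₂² - c(λ+μ₁)²) = c(λ+μ₁+μ₂)²`. -/

theorem quadratic_eq_zero_and_pos_iff {a b d : ℝ} (ha : 0 < a) (hd : d < 0) (x : ℝ) :
    (a * x ^ 2 + 2 * b * x + d = 0 ∧ 0 < x) ↔ x = (-b + √(b ^ 2 - a * d)) / a := by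
  set s := √(b ^ 2 - a * d)
  have hbs : |b| < s := by
    rw [Real.lt_sqrt (abs_nonneg b), sq_abs]
    nlinarith
  have hdisc : discrim a (2 * b) d = (2 * s) * (2 * s) := by
    have : s * s = b ^ 2 - a * d := Real.mul_self_sqrt (by nlinarith)
    rw [discrim]
    linear_combination -4 * this
  have hroots := quadratic_eq_zero_iff ha.ne' hdisc x
  have hplus : (-(2 * b) + 2 * s) / (2 * a) = (-b + s) / a := by field_simp
  have hminus : (-(2 * b) - 2 * s) / (2 * a) < 0 :=
    div_neg_of_neg_of_pos (by linarith [neg_abs_le b]) (by positivity)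
  rw [hplus] at hroots
  have hpos : 0 < (-b + s) / a := div_pos (by linarith [le_abs_self b]) ha
  constructor
  · rintro ⟨hx, hxpos⟩
    rcases hroots.mp (by linear_combination hx) with h | h
    · exact h
    · linarith
  · rintro rfl
    exact ⟨by linear_combination hroots.mpr (Or.inl rfl), hpos⟩

theorem unique_positive_root_case
    (lam mu1 mu2 : ℝ) (hlam : 0 < lam) (hmu1 : 0 < mu1) (hmu2 : 0 < mu2)
    (hmu : mu1 < mu2)
    (c : ℝ) (hc : c = mu1 * (lam + mu2) / (mu2 * (lam + mu1)))
    (hcond : mu2 ^ 2 - mu1 * (lam + mu1) * (lam + mu2) / mu2 < 0)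
    (q : ℝ → ℝ)
    (hq : q = fun x => x ^ 2 * (1 - c) + 2 * x * (mu2 + c * (lam + mu1))
        + mu2 ^ 2 - c * (lam + mu1) ^ 2)
    (lamstar : ℝ)
    (hstar : lamstar =
      (-(mu2 + c * (lam + mu1)) +
        Real.sqrt (mu1 * (lam + mu2) *
          (2 + mu2 / (lam + mu1) + (lam + mu1) / mu2))) /
      (1 - mu1 * (lam + mu2) / (mu2 * (lam + mu1)))) :
    q lamstar = 0 ∧ 0 < lamstar ∧ ∀ r : ℝ, q r = 0 → 0 < r → r = lamstar := by
  have hA : 0 < lam + mu1 := by linarith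
  have hlead : 0 < 1 - c := by
    rw [hc, sub_pos, div_lt_one (by positivity)]
    nlinarith
  have hconst : mu2 ^ 2 - c * (lam + mu1) ^ 2 < 0 := by
    convert hcond using 2
    rw [hc]
    field_simp
  have hdisc : (mu2 + c * (lam + mu1)) ^ 2 - (1 - c) * (mu2 ^ 2 - c * (lam + mu1) ^ 2)
      = mu1 * (lam + mu2) * (2 + mu2 / (lam + mu1) + (lam + mu1) / mu2) := by
    rw [hc]
    field_simp
    ring
  have hroot := quadratic_eq_zero_and_pos_iff (b := mu2 + c * (lam + mu1)) hlead hconst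
  have hq_eq : ∀ x, q x = (1 - c) * x ^ 2 + 2 * (mu2 + c * (lam + mu1)) * x
      + (mu2 ^ 2 - c * (lam + mu1) ^ 2) := fun x => by rw [hq]; ring
  have hstar' : lamstar = (-(mu2 + c * (lam + mu1)) + √((mu2 + c * (lam + mu1)) ^ 2
      - (1 - c) * (mu2 ^ 2 - c * (lam + mu1) ^ 2))) / (1 - c) := by
    rw [hstar, hdisc, hc]
  obtain ⟨hzero, hpos⟩ := (hroot lamstar).mpr hstar'
  refine ⟨by rwa [hq_eq], hpos, fun r hr hrpos => ?_⟩
  rw [hstar']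
  exact (hroot r).mp ⟨by rwa [← hq_eq], hrpos⟩
end

section
/- The stationary distribution of the 6-state Markov chain on orderings of 3 heterogeneous servers, determined by π₁(λ₂+λ₃) = λ₁(π₃+π₄), π₂(λ₂+λ₃) = λ₁(π₅+π₆), π₃(λ₁+λ₃) = λ₂(π₁+π₂), π₄(λ₁+λ₃) = λ₂(π₅+π₆), π₅(λ₁+λ₂) = λ₃(π₁+π₂), π₆(λ₁+λ₂) = λ₃(π₃+π₄), together with ∑πᵢ = 1, is given by π₁ = λ₁λ₂/((λ₂+λ₃)Λ), π₂ = λ₁λ₃/((λ₂+λ₃)Λ), π₃ = λ₂λ₁/((λ₁+λ₃)Λ), π₄ = λ₂λ₃/((λ₁+λ₃)Λ), π₅ = λ₃λ₁/((λ₁+λ₂)Λ), π₆ = λ₃λ₂/((λ₁+λ₂)Λ), where Λ = λ₁+λ₂+λ₃. -/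
/-!
Adding the two balance equations of the states {1,2} (resp. {3,4}, {5,6}) and using
∑ πᵢ = 1 shows that this pair carries total mass λ₁/Λ (resp. λ₂/Λ, λ₃/Λ). Each single
balance equation then expresses πᵢ through the mass of another pair.
-/

theorem pair_mass_mul_eq {a b c Λ P Q R : ℝ} (hΛ : a + b + c = Λ)
    (hbal : P * (b + c) = a * (Q + R)) (hsum : P + Q + R = 1) : P * Λ = a := by
  rw [← hΛ]
  linear_combination hbal + a * hsum

theorem eq_mul_div_of_balance {p r a m b Λ : ℝ} (hr : r ≠ 0) (hΛ : Λ ≠ 0)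
    (hp : p * r = a * m) (hm : m * Λ = b) : p = a * b / (r * Λ) := by
  rw [eq_div_iff (mul_ne_zero hr hΛ)]
  linear_combination Λ * hp + a * hm

theorem stationary_distribution_three_heterogeneous_servers
    (lam1 lam2 lam3 : ℝ) (h1 : 0 < lam1) (h2 : 0 < lam2) (h3 : 0 < lam3)
    (L : ℝ) (hL : L = lam1 + lam2 + lam3)
    (p1 p2 p3 p4 p5 p6 : ℝ)
    (b1 : p1 * (lam2 + lam3) = lam1 * (p3 + p4))
    (b2 : p2 * (lam2 + lam3) = lam1 * (p5 + p6))
    (b3 : p3 * (lam1 + lam3) = lam2 * (p1 + p2))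
    (b4 : p4 * (lam1 + lam3) = lam2 * (p5 + p6))
    (b5 : p5 * (lam1 + lam2) = lam3 * (p1 + p2))
    (b6 : p6 * (lam1 + lam2) = lam3 * (p3 + p4))
    (hsum : p1 + p2 + p3 + p4 + p5 + p6 = 1) :
    p1 = lam1 * lam2 / ((lam2 + lam3) * L) ∧
    p2 = lam1 * lam3 / ((lam2 + lam3) * L) ∧
    p3 = lam2 * lam1 / ((lam1 + lam3) * L) ∧
    p4 = lam2 * lam3 / ((lam1 + lam3) * L) ∧
    p5 = lam3 * lam1 / ((lam1 + lam2) * L) ∧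
    p6 = lam3 * lam2 / ((lam1 + lam2) * L) := by
  have mass12 : (p1 + p2) * L = lam1 :=
    pair_mass_mul_eq (Q := p3 + p4) (R := p5 + p6) hL.symm
      (by linear_combination b1 + b2) (by linear_combination hsum)
  have mass34 : (p3 + p4) * L = lam2 :=
    pair_mass_mul_eq (b := lam1) (c := lam3) (Q := p1 + p2) (R := p5 + p6) (by rw [hL]; ring)
      (by linear_combination b3 + b4) (by linear_combination hsum)
  have mass56 : (p5 + p6) * L = lam3 :=
    pair_mass_mul_eq (b := lam1) (c := lam2) (Q := p1 + p2) (R := p3 + p4) (by rw [hL]; ring)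
      (by linear_combination b5 + b6) (by linear_combination hsum)
  have hL0 : L ≠ 0 := by rw [hL]; positivity
  have h12 : lam1 + lam2 ≠ 0 := by positivity
  have h13 : lam1 + lam3 ≠ 0 := by positivity
  have h23 : lam2 + lam3 ≠ 0 := by positivity
  exact ⟨eq_mul_div_of_balance h23 hL0 b1 mass34, eq_mul_div_of_balance h23 hL0 b2 mass56,
    eq_mul_div_of_balance h13 hL0 b3 mass12, eq_mul_div_of_balance h13 hL0 b4 mass56,
    eq_mul_div_of_balance h12 hL0 b5 mass12, eq_mul_div_of_balance h12 hL0 b6 mass34⟩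
end

section
/- For the single-source n-server homogeneous LCFS network, the average AoI satisfies v₀ = v_n + (λ/(nμ))·w_n, where v_n = v₁ + ∑_{j=2}^n w_j, v₁ = 1/(nλ), and w_j = (1/(nλ))∏_{i=1}^{j-1}(λ(n-i+1))/(iμ+(n-i)λ); i.e., v₀ = ∑_{j=2}^n w_j + 1/(nλ) + (λ/(nμ))w_n. -/
/-!
Substituting the definition of `v 0` into the `i = n` recursion equation gives the balance
`n μ v₀ = n μ vₙ + λ (vₙ - vₙ₋₁)`, and the increment `vₙ - vₙ₋₁` is `wₙ`.
For `n = 1` the term `vₙ₋₁` is `v₀` itself, and the balance together with `v₀ - v₁ = 1/μ`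
forces `λ + μ = 0`, so that case is vacuous; for `n = 0` the recursion equation reads `0 = -1`.
-/

open Finset

theorem sub_pred_eq_of_eq_add_sum_Icc {c : ℝ} {v w : ℕ → ℝ} {n j : ℕ}
    (hv : ∀ j : ℕ, 1 ≤ j → j ≤ n → v j = c + ∑ k ∈ Icc 2 j, w k) (h2 : 2 ≤ j) (hj : j ≤ n) :
    v j - v (j - 1) = w j := by
  obtain ⟨i, rfl⟩ : ∃ i, j = i + 1 := ⟨j - 1, by omega⟩
  rw [Nat.add_sub_cancel, hv (i + 1) (by omega) hj, hv i (by omega) (by omega),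
    sum_Icc_succ_top (by omega)]
  ring

theorem mul_v_zero_eq_of_recursion {n : ℕ} {lam mu : ℝ} {v : ℕ → ℝ} (hn : n ≠ 0) (hmu : mu ≠ 0)
    (hsum : mu * ∑ i ∈ Icc 1 n, v i = (lam + n * mu) * v n - 1 - lam * v (n - 1))
    (hv0 : v 0 = 1 / (n * mu) + (1 / n) * ∑ j ∈ Icc 1 n, v j) :
    n * mu * v 0 = n * mu * v n + lam * (v n - v (n - 1)) := by
  rw [hv0]
  field_simp
  linear_combination hsum

theorem aoi_v0_identity_general
    (n : ℕ) (lam mu : ℝ) (hlam : 0 < lam) (hmu : 0 < mu)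
    (v w : ℕ → ℝ)
    (hv1 : v 1 = 1 / (n * lam))
    (hvj : ∀ j : ℕ, 1 ≤ j → j ≤ n → v j = v 1 + ∑ k ∈ Icc 2 j, w k)
    (hsum : mu * ∑ i ∈ Icc 1 n, v i = (lam + n * mu) * v n - 1 - lam * v (n - 1))
    (hv0 : v 0 = 1 / (n * mu) + (1 / n) * ∑ j ∈ Icc 1 n, v j) :
    v 0 = ∑ j ∈ Icc 2 n, w j + 1 / (n * lam) + (lam / (n * mu)) * w n := by
  obtain rfl | rfl | hn2 : n = 0 ∨ n = 1 ∨ 2 ≤ n := by omega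
  · simp at hsum
  · have hbalance : mu * v 0 = mu * v 1 + lam * (v 1 - v 0) := by
      simpa using mul_v_zero_eq_of_recursion one_ne_zero hmu.ne' hsum hv0
    have hgap : v 0 - v 1 = 1 / mu := by simpa using congrArg (· - v 1) hv0
    have hzero : (lam + mu) * (1 / mu) = 0 := by rw [← hgap]; linear_combination hbalance
    exact absurd hzero (by positivity)
  · have hn : (n : ℝ) ≠ 0 := by positivity
    have hbalance := mul_v_zero_eq_of_recursion (by omega) hmu.ne' hsum hv0
    rw [sub_pred_eq_of_eq_add_sum_Icc hvj hn2 le_rfl, hvj n (by omega) le_rfl, hv1] at hbalance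
    have hlam' := hlam.ne'
    field_simp at hbalance ⊢
    linear_combination hbalance

theorem aoi_v0_identity
    (n : ℕ) (hn : 1 ≤ n) (lam mu : ℝ) (hlam : 0 < lam) (hmu : 0 < mu)
    (v w : ℕ → ℝ)
    (hw : ∀ j : ℕ, 2 ≤ j → j ≤ n →
      w j = (1 / (n * lam)) * ∏ i ∈ Icc 1 (j - 1),
        (lam * ((n : ℝ) - i + 1)) / ((i : ℝ) * mu + ((n : ℝ) - i) * lam))
    (hv1 : v 1 = 1 / (n * lam))
    (hvj : ∀ j : ℕ, 1 ≤ j → j ≤ n → v j = v 1 + ∑ k ∈ Icc 2 j, w k)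
    (hsum : mu * ∑ i ∈ Icc 1 n, v i = (lam + n * mu) * v n - 1 - lam * v (n - 1))
    (hv0 : v 0 = 1 / (n * mu) + (1 / n) * ∑ j ∈ Icc 1 n, v j) :
    v 0 = ∑ j ∈ Icc 2 n, w j + 1 / (n * lam) + (lam / (n * mu)) * w n :=
  aoi_v0_identity_general n lam mu hlam hmu v w hv1 hvj hsum hv0
end
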